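/- arXiv:2305.16102 — 4 statements merged into one kernel-verified Lean document; each statement's English description precedes it below -/
import Mathlib

section
/- Consider the attention-based GNN dynamics. Under assumptions (A2), (A3) and (A4), there exists ε > 0 such that for all t ≥ 0 and every edge (i,j) ∈ E(G), the attention coefficient satisfies P^(t)_{ij} ≥ ε. -/
open Matrix Filter

noncomputable section

/-- Frobenius norm of a real matrix. -/
def frobNorm {N d : ℕ} (X : Matrix (Fin N) (Fin d) ℝ) : ℝ :=
  Real.sqrt (∑ i, ∑ j, (X i j) ^ 2)

/-- μ(X) = ‖X − 1γ_X‖_F where γ_X = (1/N)1ᵀX. -/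
def gnnMu {N d : ℕ} (X : Matrix (Fin N) (Fin d) ℝ) : ℝ :=
  frobNorm (X - Matrix.of fun _i j => (∑ k, X k j) / N)

/-- Row-stochastic matrix. -/
def rowStochastic {N : ℕ} (P : Matrix (Fin N) (Fin N) ℝ) : Prop :=
  (∀ i j, 0 ≤ P i j) ∧ ∀ i, ∑ j, P i j = 1

/-- The set 𝒫_{G,ε}. -/
def Pset {N : ℕ} (G : SimpleGraph (Fin N)) (ε : ℝ) : Set (Matrix (Fin N) (Fin N) ℝ) :=
  {P | rowStochastic P ∧ (∀ i j, G.Adj i j → ε ≤ P i j ∧ P i j ≤ 1) ∧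
    ∀ i j, ¬ G.Adj i j → P i j = 0}

/-- The set 𝒟 of diagonal matrices with diagonal entries in [0,1]. -/
def Dset (N : ℕ) : Set (Matrix (Fin N) (Fin N) ℝ) :=
  {D | D.IsDiag ∧ ∀ i, 0 ≤ D i i ∧ D i i ≤ 1}

/-- The set 𝒟_δ of diagonal matrices with diagonal entries in [0,δ]. -/
def DsetB (N : ℕ) (δ : ℝ) : Set (Matrix (Fin N) (Fin N) ℝ) :=
  {D | D.IsDiag ∧ ∀ i, 0 ≤ D i i ∧ D i i ≤ δ}

/-- The set ℳ_{G,ε} = {DP : D ∈ 𝒟, P ∈ 𝒫_{G,ε}}. -/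
def Mset {N : ℕ} (G : SimpleGraph (Fin N)) (ε : ℝ) : Set (Matrix (Fin N) (Fin N) ℝ) :=
  {M | ∃ D ∈ Dset N, ∃ P ∈ Pset G ε, M = D * P}

/-- The set ℳ_{G,ε,δ} = {DP : D ∈ 𝒟_δ, P ∈ 𝒫_{G,ε}}. -/
def MsetB {N : ℕ} (G : SimpleGraph (Fin N)) (ε δ : ℝ) : Set (Matrix (Fin N) (Fin N) ℝ) :=
  {M | ∃ D ∈ DsetB N δ, ∃ P ∈ Pset G ε, M = D * P}

/-- Backward product P^(t) P^(t-1) ⋯ P^(0). -/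
def bprod {N : ℕ} (P : ℕ → Matrix (Fin N) (Fin N) ℝ) : ℕ → Matrix (Fin N) (Fin N) ℝ
  | 0 => P 0
  | t + 1 => P (t + 1) * bprod P t

/-- The orthogonal projection J = I − (1/N)11ᵀ onto the complement of span{1}. -/
def projJ (N : ℕ) : Matrix (Fin N) (Fin N) ℝ :=
  1 - (N : ℝ)⁻¹ • Matrix.of fun _ _ => (1 : ℝ)

/-- Matrix ∞-norm: maximum absolute row sum. -/
def infNorm {N : ℕ} (M : Matrix (Fin N) (Fin N) ℝ) : ℝ :=
  ⨆ i, ∑ j, |M i j|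

/-- Forward product of entrywise absolute values |W^(0)||W^(1)|⋯|W^(k)|. -/
def Wabs {d : ℕ} (W : ℕ → Matrix (Fin d) (Fin d) ℝ) : ℕ → Matrix (Fin d) (Fin d) ℝ
  | 0 => (W 0).map (fun x => |x|)
  | k + 1 => Wabs W k * (W (k + 1)).map (fun x => |x|)

/-- Q̂_{t₀, t₀+k} = P^{t₀+k} D^{t₀+k-1} P^{t₀+k-1} ⋯ D^{t₀} P^{t₀}. -/
def Qhat {N : ℕ} (D P : ℕ → Matrix (Fin N) (Fin N) ℝ) (t₀ : ℕ) :
    ℕ → Matrix (Fin N) (Fin N) ℝ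
  | 0 => P t₀
  | k + 1 => P (t₀ + k + 1) * D (t₀ + k) * Qhat D P t₀ k

/-- Q_{0,k} = D^(k) P^(k) ⋯ D^(0) P^(0). -/
def Qprod {N : ℕ} (D P : ℕ → Matrix (Fin N) (Fin N) ℝ) : ℕ → Matrix (Fin N) (Fin N) ℝ
  | 0 => D 0 * P 0
  | k + 1 => D (k + 1) * P (k + 1) * Qprod D P k

/-- P^(m+k) P^(m+k-1) ⋯ P^(m). -/
def PprodFrom {N : ℕ} (P : ℕ → Matrix (Fin N) (Fin N) ℝ) (m : ℕ) :
    ℕ → Matrix (Fin N) (Fin N) ℝ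
  | 0 => P m
  | k + 1 => P (m + k + 1) * PprodFrom P m k

/-- D^(m+k) P^(m+k) ⋯ D^(m) P^(m). -/
def QprodFrom {N : ℕ} (D P : ℕ → Matrix (Fin N) (Fin N) ℝ) (m : ℕ) :
    ℕ → Matrix (Fin N) (Fin N) ℝ
  | 0 => D m * P m
  | k + 1 => D (m + k + 1) * P (m + k + 1) * QprodFrom D P m k

/-- Joint spectral radius of a set of square matrices (w.r.t. the Frobenius norm;
the value is independent of the chosen norm). -/
def JSR {n : ℕ} (A : Set (Matrix (Fin n) (Fin n) ℝ)) : ℝ :=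
  Filter.limsup (fun k : ℕ =>
    sSup {x : ℝ | ∃ M : Fin k → Matrix (Fin n) (Fin n) ℝ,
      (∀ i, M i ∈ A) ∧ x = frobNorm (List.ofFn M).prod ^ (k : ℝ)⁻¹}) Filter.atTop

/-- Spectral radius of a real square matrix: max modulus of its complex eigenvalues. -/
def specRad {n : ℕ} (M : Matrix (Fin n) (Fin n) ℝ) : ℝ :=
  sSup {r : ℝ | ∃ z ∈ spectrum ℂ (M.map Complex.ofReal), r = ‖z‖}

end

/-!
The features `X⁽ᵗ⁾W⁽ᵗ⁾` stay uniformly bounded: since `|σ x| ≤ |x|` and each `P⁽ᵗ⁾` is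
substochastic, induction on `t` gives the entrywise bound
`|X⁽ᵗ⁾W⁽ᵗ⁾| ≤ 𝟙 (𝟙ᵀ|X⁽⁰⁾|) |W⁽⁰⁾|⋯|W⁽ᵗ⁾|`, which (A3) bounds uniformly in `t`.
The continuous `Ψ` is then bounded, say by `M`, on the compact box containing all pairs of
feature rows, so every softmax weight on an edge is at least `e^{-M} / (N e^{M})`.
-/

lemma abs_le_abs_of_div_mem_Icc {σ : ℝ → ℝ} (h0 : σ 0 = 0)
    (h : ∀ x : ℝ, x ≠ 0 → 0 ≤ σ x / x ∧ σ x / x ≤ 1) (x : ℝ) : |σ x| ≤ |x| := by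
  rcases eq_or_ne x 0 with rfl | hx
  · simp [h0]
  · obtain ⟨hlo, hhi⟩ := h x hx
    calc |σ x| = |σ x / x| * |x| := by rw [← abs_mul, div_mul_cancel₀ _ hx]
      _ ≤ 1 * |x| := by gcongr; exact abs_le.2 ⟨by linarith, hhi⟩
      _ = |x| := one_mul _

section EntrywiseBounds

variable {l m n : Type*} [Fintype m]

lemma abs_mul_apply_le_vecMul_map_abs {Z : Matrix l m ℝ} {W : Matrix m n ℝ} {v : m → ℝ}
    (hZ : ∀ i k, |Z i k| ≤ v k) (i : l) (j : n) :
    |(Z * W) i j| ≤ (v ᵥ* W.map abs) j :=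
  calc |(Z * W) i j| ≤ ∑ k, |Z i k| * |W k j| := by
        simpa only [Matrix.mul_apply, abs_mul] using
          Finset.abs_sum_le_sum_abs (fun k => Z i k * W k j) Finset.univ
    _ ≤ ∑ k, v k * |W k j| := by gcongr with k; exact hZ i k
    _ = (v ᵥ* W.map abs) j := rfl

lemma abs_map_mul_apply_le [Nonempty m] {σ : ℝ → ℝ} (hσ : ∀ x, |σ x| ≤ |x|)
    {P : Matrix l m ℝ} (hP₀ : ∀ i k, 0 ≤ P i k) (hP₁ : ∀ i, ∑ k, P i k ≤ 1)
    {Z : Matrix m n ℝ} {v : n → ℝ} (hZ : ∀ k j, |Z k j| ≤ v j) (i : l) (j : n) :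
    |((P * Z).map σ) i j| ≤ v j := by
  have hv : 0 ≤ v j := (abs_nonneg _).trans (hZ (Classical.arbitrary m) j)
  calc |((P * Z).map σ) i j| ≤ |∑ k, P i k * Z k j| := hσ _
    _ ≤ ∑ k, P i k * |Z k j| := by
        simpa only [abs_mul, abs_of_nonneg (hP₀ i _)] using
          Finset.abs_sum_le_sum_abs (fun k => P i k * Z k j) Finset.univ
    _ ≤ ∑ k, P i k * v j := by gcongr with k; exacts [hP₀ i k, hZ k j]
    _ = (∑ k, P i k) * v j := (Finset.sum_mul _ _ _).symm
    _ ≤ 1 * v j := by gcongr; exact hP₁ i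
    _ = v j := one_mul _

end EntrywiseBounds

section NeighborSoftmax

variable {V : Type*} [Fintype V] (G : SimpleGraph V) [DecidableRel G.Adj]

noncomputable def neighborSoftmax (s : V → V → ℝ) : Matrix V V ℝ := fun i j =>
  if G.Adj i j then Real.exp (s i j) / ∑ k ∈ G.neighborFinset i, Real.exp (s i k) else 0

variable {G}

lemma neighborSoftmax_nonneg (s : V → V → ℝ) (i j : V) : 0 ≤ neighborSoftmax G s i j := by
  unfold neighborSoftmax
  split_ifs
  · positivity
  · exact le_rfl

lemma sum_neighborSoftmax_le_one (s : V → V → ℝ) (i : V) :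
    ∑ j, neighborSoftmax G s i j ≤ 1 := by
  classical
  simp only [neighborSoftmax]
  rw [← Finset.sum_filter, ← SimpleGraph.neighborFinset_eq_filter, ← Finset.sum_div]
  exact div_self_le_one _

lemma exp_neg_div_le_neighborSoftmax {s : V → V → ℝ} {M : ℝ} (hs : ∀ i j, |s i j| ≤ M)
    {i j : V} (hij : G.Adj i j) :
    Real.exp (-M) / (Fintype.card V * Real.exp M) ≤ neighborSoftmax G s i j := by
  have hj : j ∈ G.neighborFinset i := (G.mem_neighborFinset i j).2 hij
  have hsum_le : ∑ k ∈ G.neighborFinset i, Real.exp (s i k) ≤ Fintype.card V * Real.exp M :=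
    calc ∑ k ∈ G.neighborFinset i, Real.exp (s i k)
        ≤ ∑ _k ∈ G.neighborFinset i, Real.exp M := by
          gcongr with k; exact (le_abs_self _).trans (hs i k)
      _ = (G.neighborFinset i).card * Real.exp M := by rw [Finset.sum_const, nsmul_eq_mul]
      _ ≤ Fintype.card V * Real.exp M := by
          gcongr; exact_mod_cast Finset.card_le_univ _
  rw [neighborSoftmax, if_pos hij]
  exact div_le_div₀ (Real.exp_pos _).le (Real.exp_le_exp.2 (neg_le_of_abs_le (hs i j)))
    (Finset.sum_pos (fun k _ => Real.exp_pos _) ⟨j, hj⟩) hsum_le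

end NeighborSoftmax

lemma exists_abs_le_of_continuous {ι : Type*} [Fintype ι]
    {f : (ι → ℝ) × (ι → ℝ) → ℝ} (hf : Continuous f) (R : ℝ) :
    ∃ M, ∀ x y : ι → ℝ, (∀ j, |x j| ≤ R) → (∀ j, |y j| ≤ R) → |f (x, y)| ≤ M := by
  obtain ⟨M, hM⟩ := (isCompact_Icc (a := -fun _ : ι => R) (b := fun _ => R)).prod
    isCompact_Icc |>.exists_bound_of_continuousOn hf.continuousOn
  have mem_box : ∀ z : ι → ℝ, (∀ j, |z j| ≤ R) → z ∈ Set.Icc (-fun _ => R) fun _ => R :=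
    fun z hz => ⟨fun j => (abs_le.1 (hz j)).1, fun j => (abs_le.1 (hz j)).2⟩
  exact ⟨M, fun x y hx hy => hM (x, y) ⟨mem_box x hx, mem_box y hy⟩⟩

section Features

variable {N d : ℕ} [Nonempty (Fin N)] {σ : ℝ → ℝ} {P : ℕ → Matrix (Fin N) (Fin N) ℝ}
  {X : ℕ → Matrix (Fin N) (Fin d) ℝ} {W : ℕ → Matrix (Fin d) (Fin d) ℝ}

lemma abs_features_le_vecMul_Wabs (hσ : ∀ x, |σ x| ≤ |x|) (hP₀ : ∀ t i k, 0 ≤ P t i k)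
    (hP₁ : ∀ t i, ∑ k, P t i k ≤ 1) (hdyn : ∀ t, X (t + 1) = (P t * X t * W t).map σ)
    (t : ℕ) (i : Fin N) (j : Fin d) :
    |(X t * W t) i j| ≤ ((fun k => ∑ i', |X 0 i' k|) ᵥ* Wabs W t) j := by
  induction t generalizing i j with
  | zero =>
    refine abs_mul_apply_le_vecMul_map_abs (fun i k => ?_) i j
    exact Finset.single_le_sum (f := fun i' => |X 0 i' k|) (fun _ _ => abs_nonneg _)
      (Finset.mem_univ i)
  | succ t ih =>
    have hX : ∀ i k, |X (t + 1) i k| ≤ ((fun k => ∑ i', |X 0 i' k|) ᵥ* Wabs W t) k := by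
      rw [hdyn t, Matrix.mul_assoc]
      exact abs_map_mul_apply_le hσ (hP₀ t) (hP₁ t) ih
    simpa only [Wabs, Matrix.vecMul_vecMul] using abs_mul_apply_le_vecMul_map_abs hX i j

lemma exists_abs_features_le (hσ : ∀ x, |σ x| ≤ |x|) (hP₀ : ∀ t i k, 0 ≤ P t i k)
    (hP₁ : ∀ t i, ∑ k, P t i k ≤ 1) (hdyn : ∀ t, X (t + 1) = (P t * X t * W t).map σ)
    {C : ℝ} (hC : ∀ k i j, |Wabs W k i j| ≤ C) :
    ∃ R, ∀ t i j, |(X t * W t) i j| ≤ R := by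
  refine ⟨∑ k, (∑ i', |X 0 i' k|) * C, fun t i j => ?_⟩
  refine (abs_features_le_vecMul_Wabs hσ hP₀ hP₁ hdyn t i j).trans ?_
  show ∑ k, (∑ i', |X 0 i' k|) * Wabs W t k j ≤ _
  gcongr with k
  exact (le_abs_self _).trans (hC t k j)

end Features

theorem stmt_3_general (N d : ℕ) (hN : 2 ≤ N)
    (G : SimpleGraph (Fin N)) [DecidableRel G.Adj]
    (Ψ : (Fin d → ℝ) → (Fin d → ℝ) → ℝ)
    (hA2 : Continuous fun p : (Fin d → ℝ) × (Fin d → ℝ) => Ψ p.1 p.2)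
    (W : ℕ → Matrix (Fin d) (Fin d) ℝ) (σ : ℝ → ℝ)
    (X : ℕ → Matrix (Fin N) (Fin d) ℝ)
    (P : ℕ → Matrix (Fin N) (Fin N) ℝ)
    (hP : ∀ t i j, P t i j =
      if G.Adj i j then
        Real.exp (Ψ ((X t * W t) i) ((X t * W t) j)) /
          ∑ k ∈ G.neighborFinset i, Real.exp (Ψ ((X t * W t) i) ((X t * W t) k))
      else 0)
    (hdyn : ∀ t, X (t + 1) = (P t * X t * W t).map σ)
    (hA3 : ∃ C : ℝ, ∀ k i j, |Wabs W k i j| ≤ C)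
    (hA4 : σ 0 = 0 ∧ ∀ x : ℝ, x ≠ 0 → 0 ≤ σ x / x ∧ σ x / x ≤ 1) :
    ∃ ε > 0, ∀ t i j, G.Adj i j → ε ≤ P t i j := by
  have : Nonempty (Fin N) := ⟨⟨0, by omega⟩⟩
  have hP_eq : ∀ t, P t = neighborSoftmax G fun i j => Ψ ((X t * W t) i) ((X t * W t) j) :=
    fun t => Matrix.ext (hP t)
  obtain ⟨C, hC⟩ := hA3
  obtain ⟨R, hR⟩ := exists_abs_features_le (abs_le_abs_of_div_mem_Icc hA4.1 hA4.2)
    (fun t => hP_eq t ▸ neighborSoftmax_nonneg _)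
    (fun t => hP_eq t ▸ sum_neighborSoftmax_le_one _) hdyn hC
  obtain ⟨M, hM⟩ := exists_abs_le_of_continuous hA2 R
  have hN₀ : (0 : ℝ) < N := Nat.cast_pos.2 (by omega)
  refine ⟨Real.exp (-M) / (N * Real.exp M), by positivity, fun t i j hij => ?_⟩
  simpa only [hP_eq t, Fintype.card_fin] using
    exp_neg_div_le_neighborSoftmax (fun i j => hM _ _ (hR t i) (hR t j)) hij

/-- under (A2)-(A4), attention coefficients on edges are uniformly
bounded below by some ε > 0. -/
theorem stmt_3 (N d : ℕ) (hN : 2 ≤ N) (hd : 1 ≤ d)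
    (G : SimpleGraph (Fin N)) [DecidableRel G.Adj]
    (hconn : G.Connected) (hnb : ¬ G.Colorable 2)
    (Ψ : (Fin d → ℝ) → (Fin d → ℝ) → ℝ)
    (hA2 : Continuous fun p : (Fin d → ℝ) × (Fin d → ℝ) => Ψ p.1 p.2)
    (W : ℕ → Matrix (Fin d) (Fin d) ℝ) (σ : ℝ → ℝ)
    (X : ℕ → Matrix (Fin N) (Fin d) ℝ)
    (P : ℕ → Matrix (Fin N) (Fin N) ℝ)
    (hP : ∀ t i j, P t i j =
      if G.Adj i j then
        Real.exp (Ψ ((X t * W t) i) ((X t * W t) j)) /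
          ∑ k ∈ G.neighborFinset i, Real.exp (Ψ ((X t * W t) i) ((X t * W t) k))
      else 0)
    (hdyn : ∀ t, X (t + 1) = (P t * X t * W t).map σ)
    (hA3 : ∃ C : ℝ, ∀ k i j, |Wabs W k i j| ≤ C)
    (hA4 : σ 0 = 0 ∧ ∀ x : ℝ, x ≠ 0 → 0 ≤ σ x / x ∧ σ x / x ≤ 1) :
    ∃ ε > 0, ∀ t i j, G.Adj i j → ε ≤ P t i j :=
  stmt_3_general N d hN G Ψ hA2 W σ X P hP hdyn hA3 hA4
end

section
/- Let G be connected and non-bipartite and let ε > 0. There exist c ∈ (0,1) and T ∈ ℕ such that for every sequence {D^(t)P^(t)}_{t≥0} with D^(t) ∈ 𝒟 and P^(t) ∈ 𝒫_{G,ε} for all t, and for all 0 ≤ t₀ ≤ t₁: ‖Q̂_{t₀,t₁+T}‖_∞ ≤ (1 − c·δ_{t₁})·‖Q̂_{t₀,t₁}‖_∞, where Q̂_{t₀,s} := P^(s)D^(s−1)P^(s−1)⋯D^(t₀)P^(t₀) for s > t₀ (with Q̂_{t₀,t₀} := P^(t₀)) and δ_t := ‖D^(t) − I_N‖_∞. 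-/
open Matrix Filter

/-!
Since `G` is connected and not bipartite, there is a single length `T` such that any two vertices
are joined by a walk of length exactly `T`. Along the block `P^(t₁+T) D^(t₁+T-1) ⋯ P^(t₁+1) D^(t₁)`
every row sum is at most `1`, and the deficit `1 - D^(t₁)_{jj}` at a vertex `j` where
`δ_{t₁}` is attained propagates back along such a walk, shrinking by at most a factor `ε` per
step. Hence every row sum of the block is at most `1 - ε^T δ_{t₁}`, and the block is
nonnegative, so submultiplicativity of `‖·‖_∞` gives the contraction with `c = min (ε^T) (1/2)`.
-/

namespace SimpleGraph

variable {V : Type*} {G : SimpleGraph V}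

theorem exists_walk_length_two_mul {u v : V} (h : G.Adj u v) :
    ∀ m : ℕ, ∃ w : G.Walk u u, w.length = 2 * m
  | 0 => ⟨.nil, rfl⟩
  | m + 1 => by
    obtain ⟨w, hw⟩ := exists_walk_length_two_mul h m
    exact ⟨.cons h (.cons h.symm w), by simp [hw]; ring⟩

theorem exists_walk_length_of_odd_le {v : V} (c : G.Walk v v) (hc : Odd c.length) {n : ℕ}
    (hn : c.length ≤ n) : ∃ w : G.Walk v v, w.length = n := by
  obtain ⟨u, h⟩ : ∃ u, G.Adj v u := by
    cases c with
    | nil => simp at hc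
    | cons h _ => exact ⟨_, h⟩
  rcases Nat.even_or_odd n with ⟨m, rfl⟩ | hodd
  · obtain ⟨w, hw⟩ := exists_walk_length_two_mul h m
    exact ⟨w, by omega⟩
  · obtain ⟨m, hm⟩ : Even (n - c.length) := (Nat.even_sub' hn).mpr (iff_of_true hodd hc)
    obtain ⟨w, hw⟩ := exists_walk_length_two_mul h m
    exact ⟨c.append w, by rw [Walk.length_append]; omega⟩

theorem Connected.exists_walk_length_eq_of_not_colorable_two [Finite V] (hconn : G.Connected)
    (hnb : ¬ G.Colorable 2) : ∃ T, 0 < T ∧ ∀ u v : V, ∃ w : G.Walk u v, w.length = T := by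
  have := hconn.nonempty
  obtain ⟨v₀, c, hc⟩ : ∃ v₀, ∃ c : G.Walk v₀ v₀, Odd c.length := by
    simpa [two_colorable_iff_forall_loop_even] using hnb
  let p : ∀ u, G.Walk u v₀ := fun u => (hconn.preconnected u v₀).some
  obtain ⟨u₀, hu₀⟩ := Finite.exists_max fun u => (p u).length
  refine ⟨2 * (p u₀).length + c.length, by grind, fun u v => ?_⟩
  have hu := hu₀ u
  have hv := hu₀ v
  obtain ⟨w, hw⟩ := exists_walk_length_of_odd_le c hc
    (n := 2 * (p u₀).length + c.length - (p u).length - (p v).length) (by omega)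
  refine ⟨((p u).append w).append (p v).reverse, ?_⟩
  rw [Walk.length_append, Walk.length_append, Walk.length_reverse]
  omega

end SimpleGraph

section Norm

variable {N : ℕ}

attribute [local instance] Matrix.linftyOpNormedAddCommGroup

theorem infNorm_eq_norm (M : Matrix (Fin N) (Fin N) ℝ) : infNorm M = ‖M‖ := by
  rw [linfty_opNorm_def, Finset.sup_univ_eq_ciSup, NNReal.coe_iSup]
  simp [infNorm, Real.norm_eq_abs]

theorem infNorm_nonneg (M : Matrix (Fin N) (Fin N) ℝ) : 0 ≤ infNorm M :=
  infNorm_eq_norm M ▸ norm_nonneg M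

theorem infNorm_mul_le (A B : Matrix (Fin N) (Fin N) ℝ) :
    infNorm (A * B) ≤ infNorm A * infNorm B := by
  simpa only [infNorm_eq_norm] using linfty_opNorm_mul A B

end Norm

section Stochastic

variable {N : ℕ}

theorem exists_infNorm_eq_sum [Nonempty (Fin N)] (M : Matrix (Fin N) (Fin N) ℝ) :
    ∃ i, infNorm M = ∑ j, |M i j| := by
  obtain ⟨i, hi⟩ := exists_eq_ciSup_of_finite (f := fun i => ∑ j, |M i j|)
  exact ⟨i, hi.symm⟩

theorem infNorm_le_of_mulVec_one_le [Nonempty (Fin N)] {A : Matrix (Fin N) (Fin N) ℝ}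
    (hA : ∀ i j, 0 ≤ A i j) {r : ℝ} (hr : ∀ i, (A *ᵥ 1) i ≤ r) : infNorm A ≤ r := by
  refine ciSup_le fun i => ?_
  simpa [abs_of_nonneg (hA i _), mulVec, dotProduct] using hr i

theorem mul_apply_nonneg {A B : Matrix (Fin N) (Fin N) ℝ} (hA : ∀ i j, 0 ≤ A i j)
    (hB : ∀ i j, 0 ≤ B i j) (i j : Fin N) : 0 ≤ (A * B) i j := by
  rw [mul_apply]
  exact Finset.sum_nonneg fun k _ => mul_nonneg (hA i k) (hB k j)

namespace rowStochastic

variable {P : Matrix (Fin N) (Fin N) ℝ} {v : Fin N → ℝ}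

theorem mulVec_mem_Icc (hP : rowStochastic P) (hv : v ∈ Set.Icc 0 1) :
    P *ᵥ v ∈ Set.Icc 0 1 := by
  refine ⟨fun i => ?_, fun i => ?_⟩
  · exact (Finset.sum_nonneg fun j _ => mul_nonneg (hP.1 i j) (hv.1 j) :
      0 ≤ ∑ j, P i j * v j)
  · calc (P *ᵥ v) i = ∑ j, P i j * v j := rfl
      _ ≤ ∑ j, P i j := Finset.sum_le_sum fun j _ =>
          mul_le_of_le_one_right (hP.1 i j) (hv.2 j)
      _ = 1 := hP.2 i

theorem mulVec_apply_le (hP : rowStochastic P) (hv : v ≤ 1) {ε b : ℝ} {i j : Fin N}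
    (hPij : ε ≤ P i j) (hb : 0 ≤ b) (hvj : v j ≤ 1 - b) : (P *ᵥ v) i ≤ 1 - ε * b := by
  have hle : ∀ k, P i k * v k ≤ P i k - if k = j then P i j * b else 0 := by
    intro k
    split_ifs with hk
    · subst hk; nlinarith [hP.1 i k]
    · nlinarith [hP.1 i k, show v k ≤ 1 from hv k]
  calc (P *ᵥ v) i = ∑ k, P i k * v k := rfl
    _ ≤ ∑ k, (P i k - if k = j then P i j * b else 0) := Finset.sum_le_sum
        fun k _ => hle k
    _ = 1 - P i j * b := by simp [Finset.sum_sub_distrib, hP.2 i]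
    _ ≤ 1 - ε * b := by nlinarith

end rowStochastic

namespace Dset

variable {D : Matrix (Fin N) (Fin N) ℝ}

theorem apply_nonneg (hD : D ∈ Dset N) (i j : Fin N) : 0 ≤ D i j := by
  rcases eq_or_ne i j with rfl | hij
  · exact (hD.2 i).1
  · exact (hD.1 hij).ge

theorem mulVec_apply (hD : D ∈ Dset N) (v : Fin N → ℝ) (i : Fin N) :
    (D *ᵥ v) i = D i i * v i := by
  rw [mulVec, dotProduct, Finset.sum_eq_single i (fun k _ hk => by rw [hD.1 hk.symm, zero_mul])
    (by simp)]

theorem mulVec_apply_le (hD : D ∈ Dset N) {v : Fin N → ℝ} (hv : 0 ≤ v) (i : Fin N) :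
    (D *ᵥ v) i ≤ v i := by
  rw [mulVec_apply hD]
  exact mul_le_of_le_one_left (hv i) (hD.2 i).2

theorem mulVec_mem_Icc (hD : D ∈ Dset N) {v : Fin N → ℝ} (hv : v ∈ Set.Icc 0 1) :
    D *ᵥ v ∈ Set.Icc 0 1 :=
  ⟨fun i => by rw [mulVec_apply hD]; exact mul_nonneg (hD.2 i).1 (hv.1 i),
    fun i => (mulVec_apply_le hD hv.1 i).trans (hv.2 i)⟩

theorem infNorm_sub_one_eq [Nonempty (Fin N)] (hD : D ∈ Dset N) :
    ∃ j, infNorm (D - 1) = 1 - D j j := by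
  obtain ⟨j, hj⟩ := exists_infNorm_eq_sum (D - 1)
  refine ⟨j, hj.trans ?_⟩
  rw [Finset.sum_eq_single j (fun k _ hk => by simp [hD.1 hk.symm, one_apply_ne hk.symm])
    (by simp)]
  simp [abs_of_nonpos (sub_nonpos.mpr (hD.2 j).2)]

end Dset

end Stochastic

section Products

variable {N : ℕ} {G : SimpleGraph (Fin N)} {ε : ℝ} (D P : ℕ → Matrix (Fin N) (Fin N) ℝ)

/-- `D^(t+s) P^(t+s) ⋯ D^(t+1) P^(t+1) D^(t)`. -/
noncomputable def Qtail (t : ℕ) : ℕ → Matrix (Fin N) (Fin N) ℝ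
  | 0 => D t
  | s + 1 => D (t + s + 1) * P (t + s + 1) * Qtail t s

theorem Qhat_add_succ (t₀ k s : ℕ) :
    Qhat D P t₀ (k + s + 1) = P (t₀ + k + s + 1) * Qtail D P (t₀ + k) s * Qhat D P t₀ k := by
  induction s with
  | zero => simp [Qhat, Qtail, mul_assoc]
  | succ s ih =>
    rw [show k + (s + 1) + 1 = k + s + 1 + 1 by ring, Qhat, ih]
    simp only [Qtail, mul_assoc, ← add_assoc]

variable {D P} (hD : ∀ t, D t ∈ Dset N) (hP : ∀ t, P t ∈ Pset G ε)
include hD hP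

theorem Qtail_mulVec_mem_Icc (t : ℕ) {v : Fin N → ℝ} (hv : v ∈ Set.Icc 0 1) :
    ∀ s, Qtail D P t s *ᵥ v ∈ Set.Icc 0 1
  | 0 => Dset.mulVec_mem_Icc (hD t) hv
  | s + 1 => by
    rw [Qtail, ← mulVec_mulVec, ← mulVec_mulVec]
    exact Dset.mulVec_mem_Icc (hD _) ((hP _).1.mulVec_mem_Icc (Qtail_mulVec_mem_Icc t hv s))

theorem Qtail_apply_nonneg (t s : ℕ) : ∀ i j, 0 ≤ Qtail D P t s i j := by
  induction s with
  | zero => exact Dset.apply_nonneg (hD t)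
  | succ s ih =>
    exact mul_apply_nonneg (mul_apply_nonneg (Dset.apply_nonneg (hD _)) (hP _).1.1) ih

theorem Qtail_mulVec_one_le_of_walk (hε : 0 < ε) (t : ℕ) {i j : Fin N} (w : G.Walk i j) :
    (Qtail D P t w.length *ᵥ 1) i ≤ 1 - ε ^ w.length * (1 - D t j j) := by
  induction w with
  | nil => simp [Qtail, Dset.mulVec_apply (hD t)]
  | @cons i m j hadj w ih =>
    have hIcc := Qtail_mulVec_mem_Icc hD hP t ⟨zero_le_one, le_rfl⟩ w.length
    have hb : 0 ≤ ε ^ w.length * (1 - D t j j) :=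
      mul_nonneg (pow_nonneg hε.le _) (sub_nonneg.mpr ((hD t).2 j).2)
    rw [SimpleGraph.Walk.length_cons, Qtail, ← mulVec_mulVec, ← mulVec_mulVec, pow_succ',
      mul_assoc]
    calc _ ≤ (P (t + w.length + 1) *ᵥ (Qtail D P t w.length *ᵥ 1)) i :=
          Dset.mulVec_apply_le (hD _) ((hP _).1.mulVec_mem_Icc hIcc).1 i
      _ ≤ _ := (hP _).1.mulVec_apply_le hIcc.2 ((hP _).2.1 i m hadj).1 hb ih

theorem infNorm_mul_Qtail_le (hε : 0 < ε) (t s : ℕ)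
    (hwalk : ∀ i j : Fin N, ∃ w : G.Walk i j, w.length = s + 1) [Nonempty (Fin N)] :
    infNorm (P (t + s + 1) * Qtail D P t s) ≤ 1 - ε ^ (s + 1) * infNorm (D t - 1) := by
  obtain ⟨j, hj⟩ := Dset.infNorm_sub_one_eq (hD t)
  refine infNorm_le_of_mulVec_one_le
    (mul_apply_nonneg (hP _).1.1 (Qtail_apply_nonneg hD hP t s)) fun i => ?_
  obtain ⟨w, hw⟩ := hwalk i j
  cases w with
  | nil => simp at hw
  | @cons _ m _ hadj w =>
    have hlen : w.length = s := by simpa using hw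
    subst hlen
    have hIcc := Qtail_mulVec_mem_Icc hD hP t ⟨zero_le_one, le_rfl⟩ w.length
    rw [← mulVec_mulVec, hj, pow_succ', mul_assoc]
    exact (hP _).1.mulVec_apply_le hIcc.2 ((hP _).2.1 i m hadj).1
      (mul_nonneg (pow_nonneg hε.le _) (sub_nonneg.mpr ((hD t).2 j).2))
      (Qtail_mulVec_one_le_of_walk hD hP hε t w)

end Products

theorem stmt_6_general (N : ℕ) (G : SimpleGraph (Fin N))
    (hconn : G.Connected) (hnb : ¬ G.Colorable 2) (ε : ℝ) (hε : 0 < ε) :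
    ∃ c : ℝ, 0 < c ∧ c < 1 ∧ ∃ T : ℕ,
      ∀ D P : ℕ → Matrix (Fin N) (Fin N) ℝ,
        (∀ t, D t ∈ Dset N) → (∀ t, P t ∈ Pset G ε) →
        ∀ t₀ t₁ : ℕ, t₀ ≤ t₁ →
          infNorm (Qhat D P t₀ (t₁ + T - t₀)) ≤
            (1 - c * infNorm (D t₁ - 1)) * infNorm (Qhat D P t₀ (t₁ - t₀)) := by
  have := hconn.nonempty
  obtain ⟨T, hT, hwalk⟩ := hconn.exists_walk_length_eq_of_not_colorable_two hnb
  obtain ⟨s, rfl⟩ : ∃ s, T = s + 1 := ⟨T - 1, by omega⟩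
  refine ⟨min (ε ^ (s + 1)) (1 / 2), by positivity, (min_le_right _ _).trans_lt (by norm_num),
    s + 1, ?_⟩
  intro D P hD hP t₀ t₁ ht
  obtain ⟨k, rfl⟩ := Nat.exists_eq_add_of_le ht
  rw [show t₀ + k + (s + 1) - t₀ = k + s + 1 by omega, Nat.add_sub_cancel_left,
    Qhat_add_succ]
  have hδ := infNorm_nonneg (D (t₀ + k) - 1)
  calc _ ≤ infNorm (P (t₀ + k + s + 1) * Qtail D P (t₀ + k) s) * infNorm (Qhat D P t₀ k) :=
        infNorm_mul_le _ _
    _ ≤ (1 - ε ^ (s + 1) * infNorm (D (t₀ + k) - 1)) * infNorm (Qhat D P t₀ k) := by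
        gcongr
        · exact infNorm_nonneg _
        · exact infNorm_mul_Qtail_le hD hP hε _ s hwalk
    _ ≤ _ := by
        gcongr
        · exact infNorm_nonneg _
        · exact min_le_left _ _

/-- long products of matrices DP contract the ∞-norm:
‖Q̂_{t₀,t₁+T}‖_∞ ≤ (1 − c δ_{t₁}) ‖Q̂_{t₀,t₁}‖_∞. -/
theorem stmt_6 (N : ℕ) (hN : 2 ≤ N) (G : SimpleGraph (Fin N))
    (hconn : G.Connected) (hnb : ¬ G.Colorable 2) (ε : ℝ) (hε : 0 < ε) :
    ∃ c : ℝ, 0 < c ∧ c < 1 ∧ ∃ T : ℕ,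
      ∀ D P : ℕ → Matrix (Fin N) (Fin N) ℝ,
        (∀ t, D t ∈ Dset N) → (∀ t, P t ∈ Pset G ε) →
        ∀ t₀ t₁ : ℕ, t₀ ≤ t₁ →
          infNorm (Qhat D P t₀ (t₁ + T - t₀)) ≤
            (1 - c * infNorm (D t₁ - 1)) * infNorm (Qhat D P t₀ (t₁ - t₀)) :=
  stmt_6_general N G hconn hnb ε hε
end

section
/- Let G be connected and non-bipartite and let 0 < ε < 1. Then JSR(𝒫̃_{G,ε}) < 1, where 𝒫̃_{G,ε} := {BPBᵀ : P ∈ 𝒫_{G,ε}}. -/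
open Matrix Filter

/-!
Since `G` is connected and not bipartite, there is an `m` such that any two vertices are joined by a
walk of length exactly `m`; hence every product of `m` matrices of `𝒫_{G,ε}` has all entries
`≥ εᵐ`, and by Dobrushin's coefficient it contracts the `ℓ¹` norm of zero-sum row vectors by
`θ = 1 - εᵐ`. The compressions `BPBᵀ` multiply like the `P`'s themselves: `BᵀB = I - 11ᵀ/N`,
`P1 = 1` and `B1 = 0` give `(BPBᵀ)B = BP`. Since the rows of `B` have zero sum, a product of `k`
compressions has Frobenius norm `O(θ^(k/m))`, and the joint spectral radius is at most
`θ^(1/m) < 1`.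
-/

namespace SimpleGraph

variable {V : Type*} {G : SimpleGraph V}

lemma Walk.exists_length_eq_add_two_mul {u v w : V} (h : G.Adj u v) (p : G.Walk u w) (j : ℕ) :
    ∃ q : G.Walk u w, q.length = p.length + 2 * j := by
  induction j with
  | zero => exact ⟨p, rfl⟩
  | succ j ih =>
    obtain ⟨q, hq⟩ := ih
    exact ⟨.cons h (.cons h.symm q), by simp [hq]; ring⟩

/-- Prepend back-and-forth steps along the first edge of `W` to `nil` (even `n`) or to `W`
(odd `n`). -/
lemma Walk.exists_closed_length_eq {u : V} (W : G.Walk u u) (hW : Odd W.length) {n : ℕ}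
    (hn : W.length ≤ n) : ∃ c : G.Walk u u, c.length = n := by
  have hu : G.Adj u W.snd := Walk.adj_snd <| by
    rw [← Walk.length_eq_zero_iff]
    rintro h
    simp [h] at hW
  rcases Nat.even_or_odd n with ⟨j, rfl⟩ | hn_odd
  · obtain ⟨c, hc⟩ := Walk.exists_length_eq_add_two_mul hu (.nil : G.Walk u u) j
    exact ⟨c, by simp [hc]; ring⟩
  · obtain ⟨c, hc⟩ := Walk.exists_length_eq_add_two_mul hu W ((n - W.length) / 2)
    refine ⟨c, ?_⟩
    obtain ⟨a, ha⟩ := hW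
    obtain ⟨b, hb⟩ := hn_odd
    omega

/-- Route every walk through a vertex `u` carrying an odd closed walk `W`, and adjust the length
by a closed walk at `u`. -/
lemma Connected.exists_forall_walk_length_eq [Fintype V] (hconn : G.Connected)
    (hnb : ¬ G.Colorable 2) : ∃ m, 0 < m ∧ ∀ a b : V, ∃ w : G.Walk a b, w.length = m := by
  obtain ⟨u, W, hW⟩ : ∃ u, ∃ W : G.Walk u u, Odd W.length := by
    simpa [two_colorable_iff_forall_loop_even] using hnb
  let p a : G.Walk a u := (hconn.preconnected a u).some
  let q b : G.Walk u b := (hconn.preconnected u b).some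
  let D := Finset.univ.sup fun a => (p a).length
  let E := Finset.univ.sup fun b => (q b).length
  refine ⟨D + E + W.length, by grind, fun a b => ?_⟩
  have hpa : (p a).length ≤ D := Finset.le_sup (f := fun a => (p a).length) (Finset.mem_univ a)
  have hqb : (q b).length ≤ E := Finset.le_sup (f := fun b => (q b).length) (Finset.mem_univ b)
  obtain ⟨c, hc⟩ := W.exists_closed_length_eq hW
    (n := D + E + W.length - (p a).length - (q b).length) (by omega)
  exact ⟨(p a).append (c.append (q b)), by simp only [Walk.length_append, hc]; omega⟩

end SimpleGraph

namespace Matrix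

variable {n : Type*} [Fintype n] [DecidableEq n] {P : Matrix n n ℝ}

lemma sum_abs_vecMul_le (hP : P ∈ rowStochastic ℝ n) (x : n → ℝ) :
    ∑ b, |(x ᵥ* P) b| ≤ ∑ a, |x a| :=
  calc ∑ b, |(x ᵥ* P) b| ≤ ∑ b, ∑ a, |x a| * P a b := by
        refine Finset.sum_le_sum fun b _ => (Finset.abs_sum_le_sum_abs _ _).trans_eq ?_
        simp only [abs_mul, abs_of_nonneg (hP.1 _ b)]
    _ = ∑ a, |x a| := by
        rw [Finset.sum_comm]
        simp only [← Finset.mul_sum, sum_row_of_mem_rowStochastic hP, mul_one]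

/-- Dobrushin's estimate: the zero sum lets one replace `P a b` by `P a b - η ≥ 0`. -/
lemma sum_abs_vecMul_le_of_le_apply (hP : P ∈ rowStochastic ℝ n) {η : ℝ}
    (hη : ∀ a b, η ≤ P a b) {x : n → ℝ} (hx : x ⬝ᵥ 1 = 0) :
    ∑ b, |(x ᵥ* P) b| ≤ (1 - Fintype.card n * η) * ∑ a, |x a| := by
  have hshift : ∀ b, (x ᵥ* P) b = ∑ a, x a * (P a b - η) := fun b => by
    have hx' : ∑ a, x a = 0 := by simpa [dotProduct] using hx
    simp only [vecMul, dotProduct, mul_sub, Finset.sum_sub_distrib, ← Finset.sum_mul, hx',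
      zero_mul, sub_zero]
  calc ∑ b, |(x ᵥ* P) b| ≤ ∑ b, ∑ a, |x a| * (P a b - η) := by
        refine Finset.sum_le_sum fun b _ => (hshift b ▸ Finset.abs_sum_le_sum_abs _ _).trans_eq ?_
        simp only [abs_mul, abs_of_nonneg (sub_nonneg.2 (hη _ b))]
    _ = (1 - Fintype.card n * η) * ∑ a, |x a| := by
        rw [Finset.sum_comm]
        simp only [← Finset.mul_sum, Finset.sum_sub_distrib, sum_row_of_mem_rowStochastic hP,
          Finset.sum_const, Finset.card_univ, nsmul_eq_mul]
        rw [← Finset.sum_mul, mul_comm]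

lemma sum_abs_vecMul_list_prod_le {S : Set (Matrix n n ℝ)} (hS : S ⊆ rowStochastic ℝ n)
    {m : ℕ} {η θ : ℝ}
    (hη : ∀ L : List (Matrix n n ℝ), L.length = m → (∀ P ∈ L, P ∈ S) → ∀ a b, η ≤ L.prod a b)
    (hθ0 : 0 ≤ θ) (hθ : 1 - Fintype.card n * η ≤ θ) {L : List (Matrix n n ℝ)}
    (hL : ∀ P ∈ L, P ∈ S) {x : n → ℝ} (hx : x ⬝ᵥ 1 = 0) :
    ∑ b, |(x ᵥ* L.prod) b| ≤ θ ^ (L.length / m) * ∑ a, |x a| := by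
  have hprod : ∀ L : List (Matrix n n ℝ), (∀ P ∈ L, P ∈ S) → L.prod ∈ rowStochastic ℝ n :=
    fun L hL => Submonoid.list_prod_mem _ fun P hP => hS (hL P hP)
  suffices ∀ q (L : List (Matrix n n ℝ)) (x : n → ℝ), (∀ P ∈ L, P ∈ S) → x ⬝ᵥ 1 = 0 →
      q * m ≤ L.length → ∑ b, |(x ᵥ* L.prod) b| ≤ θ ^ q * ∑ a, |x a| from
    this _ L x hL hx (Nat.div_mul_le_self _ _)
  intro q
  induction q with
  | zero => exact fun L x hL _ _ => by simpa using sum_abs_vecMul_le (hprod L hL) x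
  | succ q ih =>
    intro L x hL hx hlen
    have htake : ∀ P ∈ L.take m, P ∈ S := fun P hP => hL P (List.mem_of_mem_take hP)
    have hdrop : ∀ P ∈ L.drop m, P ∈ S := fun P hP => hL P (List.mem_of_mem_drop hP)
    have hA := hprod _ htake
    have hy : x ᵥ* (L.take m).prod ⬝ᵥ 1 = 0 := by
      rw [← dotProduct_mulVec, one_vecMul_of_mem_rowStochastic hA, hx]
    rw [← L.take_append_drop m, List.prod_append, ← vecMul_vecMul]
    calc _ ≤ θ ^ q * ∑ a, |(x ᵥ* (L.take m).prod) a| :=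
          ih _ _ hdrop hy (by simp only [List.length_drop]; rw [Nat.succ_mul] at hlen; omega)
      _ ≤ θ ^ q * ((1 - Fintype.card n * η) * ∑ a, |x a|) := by
          gcongr
          exact sum_abs_vecMul_le_of_le_apply hA
            (hη _ (by simp only [List.length_take]; rw [Nat.succ_mul] at hlen; omega) htake) hx
      _ ≤ θ ^ (q + 1) * ∑ a, |x a| := by
          rw [pow_succ, mul_assoc]
          gcongr

end Matrix

section Pset

variable {N : ℕ} {G : SimpleGraph (Fin N)} {ε : ℝ}

lemma Pset_subset_rowStochastic : Pset G ε ⊆ Matrix.rowStochastic ℝ (Fin N) :=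
  fun _ hP => Matrix.mem_rowStochastic_iff_sum.2 hP.1

/-- Only the summand along the first edge of the walk is kept. -/
lemma pow_length_le_list_prod_apply_of_walk (hε : 0 ≤ ε) {L : List (Matrix (Fin N) (Fin N) ℝ)}
    (hL : ∀ P ∈ L, P ∈ Pset G ε) {a b : Fin N} (w : G.Walk a b) (hw : w.length = L.length) :
    ε ^ L.length ≤ L.prod a b := by
  induction L generalizing a with
  | nil =>
    obtain rfl := w.eq_of_length_eq_zero hw
    simp
  | cons P L ih =>
    cases w with
    | nil => simp at hw
    | @cons _ c _ hac w =>
      have hP := hL P (by simp)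
      have hLS : ∀ Q ∈ L, Q ∈ Pset G ε := fun Q hQ => hL Q (by simp [hQ])
      have hprod := Submonoid.list_prod_mem _ fun Q hQ => Pset_subset_rowStochastic (hLS Q hQ)
      rw [List.prod_cons, Matrix.mul_apply, List.length_cons, pow_succ']
      calc ε * ε ^ L.length ≤ P a c * L.prod c b :=
            mul_le_mul (hP.2.1 a c hac).1 (ih hLS w (by simpa using hw)) (pow_nonneg hε _)
              (hε.trans (hP.2.1 a c hac).1)
        _ ≤ ∑ d, P a d * L.prod d b :=
            Finset.single_le_sum (fun d _ => mul_nonneg (hP.1.1 a d) (hprod.1 d b))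
              (Finset.mem_univ c)

lemma sum_abs_vecMul_list_prod_le_of_forall_walk (hN : 0 < N) (hε0 : 0 ≤ ε) (hε1 : ε ≤ 1)
    {m : ℕ} (hwalk : ∀ a b : Fin N, ∃ w : G.Walk a b, w.length = m)
    {L : List (Matrix (Fin N) (Fin N) ℝ)} (hL : ∀ P ∈ L, P ∈ Pset G ε) {x : Fin N → ℝ}
    (hx : x ⬝ᵥ 1 = 0) :
    ∑ b, |(x ᵥ* L.prod) b| ≤ (1 - ε ^ m) ^ (L.length / m) * ∑ a, |x a| := by
  refine Matrix.sum_abs_vecMul_list_prod_le Pset_subset_rowStochastic (η := ε ^ m)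
    (fun L hLm hL a b => ?_) (sub_nonneg.2 (pow_le_one₀ hε0 hε1)) ?_ hL hx
  · obtain ⟨w, hw⟩ := hwalk a b
    exact hLm ▸ pow_length_le_list_prod_apply_of_walk hε0 hL w (hw.trans hLm.symm)
  · have : (1 : ℝ) ≤ N := by exact_mod_cast hN
    rw [Fintype.card_fin]
    nlinarith [pow_nonneg hε0 m]

end Pset

lemma Matrix.abs_apply_le_one_of_mul_transpose_eq_one {m n : Type*} [Fintype n] [DecidableEq m]
    {B : Matrix m n ℝ} (hB : B * Bᵀ = 1) (i : m) (a : n) : |B i a| ≤ 1 := by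
  have hrow : ∑ b, B i b ^ 2 = 1 := by
    simpa [Matrix.mul_apply, sq] using congrFun (congrFun hB i) i
  rw [← abs_one, ← sq_le_sq, one_pow, ← hrow]
  exact Finset.single_le_sum (f := fun b => B i b ^ 2) (fun b _ => sq_nonneg _)
    (Finset.mem_univ a)

section Compression

variable {N : ℕ} {B : Matrix (Fin (N - 1)) (Fin N) ℝ}

/-- Completing `B` by the unit row `N^{-1/2} 1ᵀ` gives an orthogonal `N × N` matrix `C`; then
`Cᵀ C = 1` reads `Bᵀ B + N⁻¹ 11ᵀ = 1`. -/
lemma transpose_mul_self_eq_projJ (hN : 0 < N) (hB1 : B * Bᵀ = 1) (hB2 : B *ᵥ 1 = 0) :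
    Bᵀ * B = projJ N := by
  have hN' : (N : ℝ) ≠ 0 := by positivity
  let u : Matrix Unit (Fin N) ℝ := Matrix.of fun _ _ => √(N : ℝ)⁻¹
  have hBu : B * uᵀ = 0 := by
    ext i _
    have := congrFun hB2 i
    simp_all [u, Matrix.mul_apply, Matrix.mulVec, dotProduct, ← Finset.sum_mul]
  have huB : u * Bᵀ = 0 := by simpa using congrArg Matrix.transpose hBu
  have hs : (√(N : ℝ))⁻¹ * (√(N : ℝ))⁻¹ = (N : ℝ)⁻¹ := by
    rw [← mul_inv, Real.mul_self_sqrt (Nat.cast_nonneg _)]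
  have huu : u * uᵀ = 1 := by
    ext
    simp [u, Matrix.mul_apply, hs, hN']
  have e : Fin N ≃ Fin (N - 1) ⊕ Unit :=
    (finCongr (by omega)).trans (finSumFinEquiv.symm.trans (Equiv.sumCongr (.refl _) finOneEquiv))
  have hC : Matrix.fromRows B u * (Matrix.fromRows B u)ᵀ = 1 := by
    rw [Matrix.transpose_fromRows, Matrix.fromRows_mul_fromCols, hB1, hBu, huB, huu,
      Matrix.fromBlocks_one]
  rw [Matrix.mul_eq_one_comm_of_equiv e.symm, Matrix.transpose_fromRows,
    Matrix.fromCols_mul_fromRows] at hC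
  rw [projJ, ← hC]
  ext
  simp [u, Matrix.mul_apply, hs]

lemma mul_mul_transpose_mul_eq (hN : 0 < N) (hB1 : B * Bᵀ = 1) (hB2 : B *ᵥ 1 = 0)
    {P : Matrix (Fin N) (Fin N) ℝ} (hP : P ∈ Matrix.rowStochastic ℝ (Fin N)) :
    B * P * Bᵀ * B = B * P := by
  have hPones : P * Matrix.of (fun _ _ => (1 : ℝ)) = Matrix.of fun _ _ => 1 := by
    ext a
    simp [Matrix.mul_apply, Matrix.sum_row_of_mem_rowStochastic hP a]
  have hBones : B * (Matrix.of fun _ _ => 1 : Matrix (Fin N) (Fin N) ℝ) = 0 := by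
    ext i
    simpa [Matrix.mul_apply, Matrix.mulVec, dotProduct] using congrFun hB2 i
  rw [Matrix.mul_assoc, transpose_mul_self_eq_projJ hN hB1 hB2, projJ, Matrix.mul_sub,
    Matrix.mul_one, Matrix.mul_smul, Matrix.mul_assoc, hPones, hBones, smul_zero, sub_zero]

lemma list_prod_map_conj (hN : 0 < N) (hB1 : B * Bᵀ = 1) (hB2 : B *ᵥ 1 = 0)
    {L : List (Matrix (Fin N) (Fin N) ℝ)} (hL : ∀ P ∈ L, P ∈ Matrix.rowStochastic ℝ (Fin N)) :
    (L.map fun P => B * P * Bᵀ).prod = B * L.prod * Bᵀ := by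
  have hintertwine : (L.map fun P => B * P * Bᵀ).prod * B = B * L.prod := by
    induction L with
    | nil => simp
    | cons P L ih =>
      rw [List.map_cons, List.prod_cons, List.prod_cons, Matrix.mul_assoc,
        ih fun Q hQ => hL Q (by simp [hQ]), ← Matrix.mul_assoc,
        mul_mul_transpose_mul_eq hN hB1 hB2 (hL P (by simp)), Matrix.mul_assoc]
  rw [← hintertwine, Matrix.mul_assoc, hB1, Matrix.mul_one]

lemma frobNorm_le_of_forall_abs_le {n d : ℕ} {X : Matrix (Fin n) (Fin d) ℝ} {E : ℝ}
    (h : ∀ i j, |X i j| ≤ E) : frobNorm X ≤ n * d * E := by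
  have hsq : ∑ i, ∑ j, X i j ^ 2 ≤ (∑ i, ∑ j, |X i j|) ^ 2 :=
    calc ∑ i, ∑ j, X i j ^ 2 ≤ ∑ i, (∑ j, |X i j|) ^ 2 := by
          simp only [← sq_abs (X _ _)]
          gcongr with i
          exact Finset.sum_sq_le_sq_sum_of_nonneg fun j _ => abs_nonneg _
      _ ≤ (∑ i, ∑ j, |X i j|) ^ 2 :=
          Finset.sum_sq_le_sq_sum_of_nonneg fun i _ => Finset.sum_nonneg fun j _ => abs_nonneg _
  calc frobNorm X ≤ ∑ i, ∑ j, |X i j| :=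
        Real.sqrt_le_iff.2 ⟨Finset.sum_nonneg fun i _ => Finset.sum_nonneg fun j _ =>
          abs_nonneg _, hsq⟩
    _ ≤ ∑ _i : Fin n, ∑ _j : Fin d, E := by gcongr with i _ j; exact h i j
    _ = n * d * E := by simp [mul_assoc]

lemma frobNorm_conj_le (hB1 : B * Bᵀ = 1) (hB2 : B *ᵥ 1 = 0) {Q : Matrix (Fin N) (Fin N) ℝ}
    {c : ℝ} (hc : 0 ≤ c) (hQ : ∀ x : Fin N → ℝ, x ⬝ᵥ 1 = 0 → ∑ b, |(x ᵥ* Q) b| ≤ c * ∑ a, |x a|) :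
    frobNorm (B * Q * Bᵀ) ≤ N ^ 3 * c := by
  have hB := Matrix.abs_apply_le_one_of_mul_transpose_eq_one hB1
  have hentry : ∀ i j, |(B * Q * Bᵀ) i j| ≤ N * c := fun i j =>
    calc |(B i ᵥ* Q) ⬝ᵥ B j| ≤ ∑ b, |(B i ᵥ* Q) b| := by
          refine (Finset.abs_sum_le_sum_abs _ _).trans (Finset.sum_le_sum fun b _ => ?_)
          rw [abs_mul]
          exact mul_le_of_le_one_right (abs_nonneg _) (hB j b)
      _ ≤ c * ∑ a, |B i a| := hQ _ (congrFun hB2 i)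
      _ ≤ c * ∑ _a : Fin N, 1 := by gcongr with a; exact hB i a
      _ = N * c := by simp [mul_comm]
  calc frobNorm (B * Q * Bᵀ) ≤ (N - 1 : ℕ) * (N - 1 : ℕ) * (N * c) :=
        frobNorm_le_of_forall_abs_le hentry
    _ ≤ N * N * (N * c) := by gcongr <;> exact_mod_cast N.sub_le 1
    _ = N ^ 3 * c := by ring

end Compression

lemma frobNorm_nonneg {n d : ℕ} (X : Matrix (Fin n) (Fin d) ℝ) : 0 ≤ frobNorm X :=
  Real.sqrt_nonneg _

/-- The `k`-th term of the `limsup` defining `JSR A` is at most `C ^ (1/k) * ρ`, and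
`C ^ (1/k) → 1`. -/
lemma JSR_le_of_forall_frobNorm_prod_le {n : ℕ} {A : Set (Matrix (Fin n) (Fin n) ℝ)} {C ρ : ℝ}
    (hC : 0 < C) (hρ : 0 ≤ ρ)
    (h : ∀ k (M : Fin k → Matrix (Fin n) (Fin n) ℝ), (∀ i, M i ∈ A) →
      frobNorm (List.ofFn M).prod ≤ C * ρ ^ k) :
    JSR A ≤ ρ := by
  have hlim : Tendsto (fun k : ℕ => C ^ (k : ℝ)⁻¹ * ρ) atTop (nhds ρ) := by
    have := ((Real.continuousAt_const_rpow hC.ne').tendsto.comp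
      (tendsto_inv_atTop_zero.comp tendsto_natCast_atTop_atTop)).mul_const ρ
    simpa using this
  have hle : ∀ᶠ k : ℕ in atTop, sSup {x : ℝ | ∃ M : Fin k → Matrix (Fin n) (Fin n) ℝ,
      (∀ i, M i ∈ A) ∧ x = frobNorm (List.ofFn M).prod ^ (k : ℝ)⁻¹} ≤ C ^ (k : ℝ)⁻¹ * ρ := by
    filter_upwards [eventually_ne_atTop 0] with k hk
    refine Real.sSup_le ?_ (by positivity)
    rintro _ ⟨M, hM, rfl⟩
    calc frobNorm (List.ofFn M).prod ^ (k : ℝ)⁻¹ ≤ (C * ρ ^ k) ^ (k : ℝ)⁻¹ := by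
          gcongr
          · exact frobNorm_nonneg _
          · exact h k M hM
      _ = C ^ (k : ℝ)⁻¹ * ρ := by
          rw [Real.mul_rpow hC.le (by positivity), Real.pow_rpow_inv_natCast hρ hk]
  have hcobdd : IsCoboundedUnder (· ≤ ·) atTop fun k : ℕ => sSup {x : ℝ |
      ∃ M : Fin k → Matrix (Fin n) (Fin n) ℝ,
        (∀ i, M i ∈ A) ∧ x = frobNorm (List.ofFn M).prod ^ (k : ℝ)⁻¹} :=
    isCoboundedUnder_le_of_le atTop fun k => Real.sSup_nonneg fun _ ⟨M, _, hx⟩ =>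
      hx ▸ Real.rpow_nonneg (frobNorm_nonneg _) _
  exact (limsup_le_limsup hle hcobdd hlim.isBoundedUnder_le).trans_eq hlim.limsup_eq

/-- The natural quotient `k / m` is at least the real `k/m - 1`, and `θ ≤ 1`. -/
lemma pow_div_le_inv_mul_rpow_pow {θ : ℝ} (hθ0 : 0 < θ) (hθ1 : θ ≤ 1) {m : ℕ} (hm : 0 < m)
    (k : ℕ) : θ ^ (k / m) ≤ θ⁻¹ * (θ ^ (m : ℝ)⁻¹) ^ k := by
  have hexp : (k : ℝ) / m - 1 ≤ ((k / m : ℕ) : ℝ) := by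
    have hlt : (k : ℝ) < m * ((k / m : ℕ) + 1) := by exact_mod_cast Nat.lt_mul_div_succ k hm
    rw [sub_le_iff_le_add, div_le_iff₀ (by positivity)]
    linarith
  rw [← Real.rpow_natCast, ← Real.rpow_neg_one, ← Real.rpow_mul_natCast hθ0.le,
    ← Real.rpow_add hθ0]
  refine Real.rpow_le_rpow_of_exponent_ge hθ0 hθ1 ?_
  rw [inv_mul_eq_div]
  linarith

theorem stmt_11_general (N : ℕ) (G : SimpleGraph (Fin N))
    (hconn : G.Connected) (hnb : ¬ G.Colorable 2)
    (ε : ℝ) (hε0 : 0 < ε) (hε1 : ε < 1)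
    (B : Matrix (Fin (N - 1)) (Fin N) ℝ)
    (hB1 : B * Bᵀ = 1) (hB2 : B *ᵥ (fun _ => (1 : ℝ)) = 0) :
    JSR {Q : Matrix (Fin (N - 1)) (Fin (N - 1)) ℝ | ∃ P ∈ Pset G ε, Q = B * P * Bᵀ} < 1 := by
  have hN : 0 < N := Fin.pos_iff_nonempty.2 hconn.nonempty
  obtain ⟨m, hm, hwalk⟩ := hconn.exists_forall_walk_length_eq hnb
  set θ := 1 - ε ^ m
  have hθ0 : 0 < θ := sub_pos.2 (pow_lt_one₀ hε0.le hε1 hm.ne')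
  have hθ1 : θ < 1 := sub_lt_self 1 (pow_pos hε0 m)
  refine (JSR_le_of_forall_frobNorm_prod_le (C := N ^ 3 * θ⁻¹) (ρ := θ ^ (m : ℝ)⁻¹)
    (by positivity) (by positivity) fun k M hM => ?_).trans_lt
    (Real.rpow_lt_one hθ0.le hθ1 (by positivity))
  choose P hP hMP using hM
  obtain rfl : M = fun i => B * P i * Bᵀ := funext hMP
  have hPL : ∀ Q ∈ List.ofFn P, Q ∈ Pset G ε := by simpa [List.mem_ofFn] using hP
  rw [List.ofFn_comp' P (B * · * Bᵀ),
    list_prod_map_conj hN hB1 hB2 fun Q hQ => Pset_subset_rowStochastic (hPL Q hQ)]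
  calc _ ≤ N ^ 3 * θ ^ (k / m) := by
        simpa using frobNorm_conj_le hB1 hB2 (pow_nonneg hθ0.le _)
          fun x hx => sum_abs_vecMul_list_prod_le_of_forall_walk hN hε0.le hε1.le hwalk hPL hx
    _ ≤ N ^ 3 * (θ⁻¹ * (θ ^ (m : ℝ)⁻¹) ^ k) := by
        gcongr
        exact pow_div_le_inv_mul_rpow_pow hθ0 hθ1.le hm k
    _ = _ := by ring

/-- JSR(𝒫̃_{G,ε}) < 1. -/
theorem stmt_11 (N : ℕ) (hN : 2 ≤ N) (G : SimpleGraph (Fin N))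
    (hconn : G.Connected) (hnb : ¬ G.Colorable 2)
    (ε : ℝ) (hε0 : 0 < ε) (hε1 : ε < 1)
    (B : Matrix (Fin (N - 1)) (Fin N) ℝ)
    (hB1 : B * Bᵀ = 1) (hB2 : B *ᵥ (fun _ => (1 : ℝ)) = 0) :
    JSR {Q : Matrix (Fin (N - 1)) (Fin (N - 1)) ℝ | ∃ P ∈ Pset G ε, Q = B * P * Bᵀ} < 1 :=
  stmt_11_general N G hconn hnb ε hε0 hε1 B hB1 hB2
end

section
/- Consider the attention-based GNN dynamics in which σ is the identity map, i.e., X^(t+1) = P^(t)X^(t)W^(t). Under assumptions (A1), (A2) and (A3), there exist q ∈ (0,1) and C₁ > 0 such that μ(X^(t)) ≤ C₁·qᵗ for all t ≥ 0; consequently, all node representations (rows of X^(t)) exponentially converge to a common vector as t → ∞. -/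
open Matrix Filter

/-!
Unrolling the linear recursion gives `X t = (P (t-1) ⋯ P 0) * X 0 * (W 0 ⋯ W (t-1))`. By (A3) the
right-hand factor has bounded entries, and row-stochastic matrices preserve entry bounds, so the
arguments of `Ψ` stay in a compact box; continuity bounds the scores, hence every edge weight of
every `P t` is at least some `ε > 0`. A connected non-bipartite graph has walks of one common
length `L` between any two vertices, so every block of `L` consecutive factors has all entries
at least `ε ^ L` and shrinks the oscillation of each column by the factor `1 - N ε ^ L`. The
oscillations of the columns of `X t`, and with them `μ (X t)`, decay geometrically.
-/

open Finset SimpleGraph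

section Oscillation

variable {ι : Type*} [Fintype ι] [Nonempty ι]

def osc (y : ι → ℝ) : ℝ :=
  univ.sup' univ_nonempty y - univ.inf' univ_nonempty y

theorem osc_nonneg (y : ι → ℝ) : 0 ≤ osc y := by
  obtain ⟨i⟩ := ‹Nonempty ι›
  exact sub_nonneg.2 ((inf'_le y (mem_univ i)).trans (le_sup' y (mem_univ i)))

theorem osc_le_of_forall_mem_Icc {y : ι → ℝ} {a b : ℝ} (h : ∀ i, y i ∈ Set.Icc a b) :
    osc y ≤ b - a :=
  sub_le_sub (sup'_le _ _ fun i _ => (h i).2) (le_inf' _ _ fun i _ => (h i).1)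

theorem osc_le_two_mul {y : ι → ℝ} {R : ℝ} (h : ∀ i, |y i| ≤ R) : osc y ≤ 2 * R := by
  have := osc_le_of_forall_mem_Icc fun i => abs_le.1 (h i)
  linarith

theorem abs_sub_mean_le_osc (y : ι → ℝ) (i : ι) :
    |y i - (∑ k, y k) / Fintype.card ι| ≤ osc y := by
  have hcard : (0 : ℝ) < Fintype.card ι := Nat.cast_pos.2 Fintype.card_pos
  have hupper : (∑ k, y k) / Fintype.card ι ≤ univ.sup' univ_nonempty y := by
    rw [div_le_iff₀ hcard, mul_comm]
    simpa using sum_le_card_nsmul univ y _ fun k _ => le_sup' y (mem_univ k)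
  have hlower : univ.inf' univ_nonempty y ≤ (∑ k, y k) / Fintype.card ι := by
    rw [le_div_iff₀ hcard, mul_comm]
    simpa using card_nsmul_le_sum univ y _ fun k _ => inf'_le y (mem_univ k)
  have := inf'_le y (mem_univ i)
  have := le_sup' y (mem_univ i)
  rw [osc, abs_sub_le_iff]
  constructor <;> linarith

end Oscillation

namespace rowStochastic

variable {N : ℕ}

theorem one : rowStochastic (1 : Matrix (Fin N) (Fin N) ℝ) :=
  ⟨fun i j => by by_cases h : i = j <;> simp [one_apply, h], fun i => by simp [one_apply]⟩

theorem mul {A B : Matrix (Fin N) (Fin N) ℝ} (hA : rowStochastic A) (hB : rowStochastic B) :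
    rowStochastic (A * B) := by
  refine ⟨fun i j => ?_, fun i => ?_⟩
  · rw [mul_apply]
    exact sum_nonneg fun l _ => mul_nonneg (hA.1 i l) (hB.1 l j)
  · simp only [mul_apply]
    rw [sum_comm]
    simp [← mul_sum, hB.2, hA.2 i]

theorem one_sub_mul_nonneg [Nonempty (Fin N)] {M : Matrix (Fin N) (Fin N) ℝ}
    (hM : rowStochastic M) {η : ℝ} (hη : ∀ i j, η ≤ M i j) : 0 ≤ 1 - N * η := by
  obtain ⟨i⟩ := ‹Nonempty (Fin N)›
  have := card_nsmul_le_sum univ (M i) η fun j _ => hη i j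
  simp only [card_univ, Fintype.card_fin, nsmul_eq_mul, hM.2 i] at this
  linarith

theorem abs_mul_apply_le {n : Type*} {M : Matrix (Fin N) (Fin N) ℝ} (hM : rowStochastic M)
    {Y : Matrix (Fin N) n ℝ} {R : ℝ} (hY : ∀ l j, |Y l j| ≤ R) (i : Fin N) (j : n) :
    |(M * Y) i j| ≤ R :=
  calc |∑ l, M i l * Y l j| ≤ ∑ l, M i l * R := by
        refine (abs_sum_le_sum_abs _ _).trans (sum_le_sum fun l _ => ?_)
        rw [abs_mul, abs_of_nonneg (hM.1 i l)]
        exact mul_le_mul_of_nonneg_left (hY l j) (hM.1 i l)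
    _ = R := by rw [← sum_mul, hM.2 i, one_mul]

/-- Split `M i j = (M i j - η) + η`: the nonnegative weights `M i j - η` have total `1 - N η`. -/
theorem mulVec_apply_mem_Icc [Nonempty (Fin N)] {M : Matrix (Fin N) (Fin N) ℝ}
    (hM : rowStochastic M) {η : ℝ} (hη : ∀ i j, η ≤ M i j) (y : Fin N → ℝ) (i : Fin N) :
    (M *ᵥ y) i ∈ Set.Icc ((1 - N * η) * univ.inf' univ_nonempty y + η * ∑ k, y k)
      ((1 - N * η) * univ.sup' univ_nonempty y + η * ∑ k, y k) := by
  have hweights : ∑ j, (M i j - η) = 1 - N * η := by simp [sum_sub_distrib, hM.2 i]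
  have hsplit : (M *ᵥ y) i = ∑ j, (M i j - η) * y j + η * ∑ k, y k := by
    simp only [mulVec, dotProduct, mul_sum, ← sum_add_distrib]
    exact sum_congr rfl fun j _ => by ring
  rw [hsplit, ← hweights, sum_mul, sum_mul]
  exact ⟨add_le_add_left (sum_le_sum fun j _ =>
      mul_le_mul_of_nonneg_left (inf'_le y (mem_univ j)) (sub_nonneg.2 (hη i j))) _,
    add_le_add_left (sum_le_sum fun j _ =>
      mul_le_mul_of_nonneg_left (le_sup' y (mem_univ j)) (sub_nonneg.2 (hη i j))) _⟩

theorem osc_mulVec_le [Nonempty (Fin N)] {M : Matrix (Fin N) (Fin N) ℝ}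
    (hM : rowStochastic M) {η : ℝ} (hη : ∀ i j, η ≤ M i j) (y : Fin N → ℝ) :
    osc (M *ᵥ y) ≤ (1 - N * η) * osc y :=
  (osc_le_of_forall_mem_Icc (hM.mulVec_apply_mem_Icc hη y)).trans_eq (by rw [osc]; ring)

theorem osc_mulVec_le_osc [Nonempty (Fin N)] {M : Matrix (Fin N) (Fin N) ℝ}
    (hM : rowStochastic M) (y : Fin N → ℝ) : osc (M *ᵥ y) ≤ osc y := by
  simpa using hM.osc_mulVec_le hM.1 y

end rowStochastic

section Products

variable {α : Type*} [Monoid α]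

def backwardProd (P : ℕ → α) (s : ℕ) : ℕ → α
  | 0 => 1
  | k + 1 => P (s + k) * backwardProd P s k

def forwardProd (W : ℕ → α) : ℕ → α
  | 0 => 1
  | t + 1 => forwardProd W t * W t

theorem backwardProd_add (P : ℕ → α) (s L : ℕ) :
    ∀ k, backwardProd P s (k + L) = backwardProd P (s + L) k * backwardProd P s L
  | 0 => by simp [backwardProd]
  | k + 1 => by
    rw [Nat.add_right_comm, backwardProd, backwardProd_add P s L k, backwardProd, mul_assoc,
      show s + (k + L) = s + L + k by omega]

theorem eq_backwardProd_mul_mul_forwardProd {m n R : Type*} [Fintype m] [Fintype n]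
    [DecidableEq m] [DecidableEq n] [Semiring R] {X : ℕ → Matrix m n R}
    {P : ℕ → Matrix m m R} {W : ℕ → Matrix n n R} (h : ∀ t, X (t + 1) = P t * X t * W t) :
    ∀ t, X t = backwardProd P 0 t * X 0 * forwardProd W t
  | 0 => by simp [backwardProd, forwardProd]
  | t + 1 => by
    rw [h, eq_backwardProd_mul_mul_forwardProd h t, backwardProd, forwardProd, zero_add]
    simp only [Matrix.mul_assoc]

end Products

section Walks

variable {V : Type*} {G : SimpleGraph V}

theorem SimpleGraph.Adj.exists_walk_length_eq_two_mul {u v : V} (h : G.Adj u v) :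
    ∀ k, ∃ w : G.Walk u u, w.length = 2 * k
  | 0 => ⟨.nil, rfl⟩
  | k + 1 =>
    let ⟨w, hw⟩ := h.exists_walk_length_eq_two_mul k
    ⟨.cons h (.cons h.symm w), by simp [hw]; ring⟩

theorem SimpleGraph.Walk.exists_walk_length_eq_of_odd {c : V} (w : G.Walk c c)
    (hw : Odd w.length) {n : ℕ} (hn : w.length ≤ n) : ∃ w' : G.Walk c c, w'.length = n := by
  have hpad := (w.adj_snd (not_nil_iff_lt_length.2 hw.pos)).exists_walk_length_eq_two_mul
  rcases Nat.even_or_odd n with ⟨k, hk⟩ | hodd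
  · obtain ⟨p, hp⟩ := hpad k
    exact ⟨p, by omega⟩
  · obtain ⟨k, hk⟩ := Nat.Odd.sub_odd hodd hw
    obtain ⟨p, hp⟩ := hpad k
    exact ⟨w.append p, by rw [Walk.length_append]; omega⟩

/-- A connected non-bipartite graph has an odd closed walk; going around it and padding with
back-and-forth steps connects any two vertices by walks of one common length. -/
theorem SimpleGraph.Connected.exists_walk_length_eq [Fintype V] (hconn : G.Connected)
    (hnb : ¬ G.Colorable 2) : ∃ L, 0 < L ∧ ∀ i j : V, ∃ w : G.Walk i j, w.length = L := by
  obtain ⟨c, w, hw⟩ : ∃ c, ∃ w : G.Walk c c, Odd w.length := by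
    simpa [two_colorable_iff_forall_loop_even] using hnb
  set A := univ.sup fun v => G.dist v c
  refine ⟨2 * A + w.length, by have := hw.pos; omega, fun i j => ?_⟩
  obtain ⟨p, hp⟩ := hconn.exists_walk_length_eq_dist i c
  obtain ⟨p', hp'⟩ := hconn.exists_walk_length_eq_dist j c
  have hi : G.dist i c ≤ A := le_sup (f := fun v => G.dist v c) (mem_univ i)
  have hj : G.dist j c ≤ A := le_sup (f := fun v => G.dist v c) (mem_univ j)
  obtain ⟨loop, hloop⟩ :=
    w.exists_walk_length_eq_of_odd hw (n := 2 * A + w.length - (p.length + p'.length)) (by omega)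
  refine ⟨p.append (loop.append p'.reverse), ?_⟩
  simp only [Walk.length_append, Walk.length_reverse]
  omega

end Walks

theorem exists_pow_div_le_mul_pow {r : ℝ} (hr0 : 0 ≤ r) (hr1 : r < 1) {L : ℕ} (hL : 0 < L) :
    ∃ q, 0 < q ∧ q < 1 ∧ ∃ K > 0, ∀ t : ℕ, r ^ (t / L) ≤ K * q ^ t := by
  obtain ⟨s, hrs, hs0, hs1⟩ : ∃ s, r ≤ s ∧ 0 < s ∧ s < 1 :=
    ⟨(1 + r) / 2, by linarith, by positivity, by linarith⟩
  have hLpos : (0 : ℝ) < L := Nat.cast_pos.2 hL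
  refine ⟨s ^ (L⁻¹ : ℝ), Real.rpow_pos_of_pos hs0 _, Real.rpow_lt_one hs0.le hs1 (by positivity),
    s⁻¹, inv_pos.2 hs0, fun t => ?_⟩
  have hfloor : (t : ℝ) / L ≤ ((t / L + 1 : ℕ) : ℝ) := by
    rw [div_le_iff₀ hLpos, mul_comm]
    exact_mod_cast (Nat.lt_mul_div_succ t hL).le
  calc r ^ (t / L) ≤ s ^ (t / L) := pow_le_pow_left₀ hr0 hrs _
    _ = s⁻¹ * s ^ (t / L + 1) := by rw [pow_succ', inv_mul_cancel_left₀ hs0.ne']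
    _ ≤ s⁻¹ * s ^ ((t : ℝ) / L) := by
        rw [← Real.rpow_natCast s (t / L + 1)]
        exact mul_le_mul_of_nonneg_left
          (Real.rpow_le_rpow_of_exponent_ge hs0 hs1.le hfloor) (inv_nonneg.2 hs0.le)
    _ = s⁻¹ * (s ^ (L⁻¹ : ℝ)) ^ t := by
        rw [← Real.rpow_natCast (s ^ _) t, ← Real.rpow_mul hs0.le, inv_mul_eq_div (L : ℝ)]

section Consensus

variable {N : ℕ} {P : ℕ → Matrix (Fin N) (Fin N) ℝ}

theorem rowStochastic_backwardProd (hP : ∀ t, rowStochastic (P t)) (s : ℕ) :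
    ∀ k, rowStochastic (backwardProd P s k)
  | 0 => .one
  | k + 1 => (hP (s + k)).mul (rowStochastic_backwardProd hP s k)

theorem pow_length_le_backwardProd_apply {G : SimpleGraph (Fin N)} {ε : ℝ} (hε : 0 ≤ ε)
    (hP : ∀ t, rowStochastic (P t)) (hedge : ∀ t i j, G.Adj i j → ε ≤ P t i j) (s : ℕ) :
    ∀ {i j : Fin N} (w : G.Walk i j), ε ^ w.length ≤ backwardProd P s w.length i j
  | _, _, .nil => by simp [backwardProd]
  | i, j, .cons (v := l) h w => by
    rw [Walk.length_cons, backwardProd, mul_apply, pow_succ']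
    calc ε * ε ^ w.length ≤ P (s + w.length) i l * backwardProd P s w.length l j :=
          mul_le_mul (hedge _ i l h) (pow_length_le_backwardProd_apply hε hP hedge s w)
            (pow_nonneg hε _) ((hP _).1 i l)
      _ ≤ ∑ k, P (s + w.length) i k * backwardProd P s w.length k j :=
          single_le_sum (f := fun k => P (s + w.length) i k * backwardProd P s w.length k j)
            (fun k _ => mul_nonneg ((hP _).1 i k) ((rowStochastic_backwardProd hP s _).1 k j))
            (mem_univ l)

theorem osc_backwardProd_mulVec_le [Nonempty (Fin N)] (hP : ∀ t, rowStochastic (P t))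
    {L : ℕ} (hL : 0 < L) {η : ℝ} (hη : ∀ s i j, η ≤ backwardProd P s L i j) (t : ℕ) :
    ∀ s y, osc (backwardProd P s t *ᵥ y) ≤ (1 - N * η) ^ (t / L) * osc y := by
  induction t using Nat.strong_induction_on with
  | _ t ih =>
    intro s y
    rcases lt_or_ge t L with h | h
    · simpa [Nat.div_eq_of_lt h] using (rowStochastic_backwardProd hP s t).osc_mulVec_le_osc y
    · obtain ⟨k, rfl⟩ : ∃ k, t = k + L := ⟨t - L, by omega⟩
      rw [backwardProd_add, ← mulVec_mulVec, Nat.add_div_right k hL, pow_succ, mul_assoc]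
      exact (ih k (by omega) (s + L) _).trans (mul_le_mul_of_nonneg_left
        ((rowStochastic_backwardProd hP s L).osc_mulVec_le (hη s) y)
        (pow_nonneg ((rowStochastic_backwardProd hP 0 L).one_sub_mul_nonneg (hη 0)) _))

theorem exists_osc_backwardProd_mulVec_le_mul_pow [Nonempty (Fin N)] {G : SimpleGraph (Fin N)}
    {ε : ℝ} {L : ℕ} (hP : ∀ t, rowStochastic (P t)) (hε : 0 < ε)
    (hedge : ∀ t i j, G.Adj i j → ε ≤ P t i j) (hL : 0 < L)
    (hwalk : ∀ i j, ∃ w : G.Walk i j, w.length = L) :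
    ∃ q, 0 < q ∧ q < 1 ∧ ∃ K > 0, ∀ t y, osc (backwardProd P 0 t *ᵥ y) ≤ K * q ^ t * osc y := by
  have hblock : ∀ s i j, ε ^ L ≤ backwardProd P s L i j := fun s i j => by
    obtain ⟨w, rfl⟩ := hwalk i j
    exact pow_length_le_backwardProd_apply hε.le hP hedge s w
  have hq0 := (rowStochastic_backwardProd hP 0 L).one_sub_mul_nonneg (hblock 0)
  have hq1 : 1 - N * ε ^ L < 1 := by
    have := mul_pos (Nat.cast_pos.2 Fin.pos' : (0 : ℝ) < N) (pow_pos hε L)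
    linarith
  obtain ⟨q, hq, hq', K, hK, hgeom⟩ := exists_pow_div_le_mul_pow hq0 hq1 hL
  exact ⟨q, hq, hq', K, hK, fun t y => (osc_backwardProd_mulVec_le hP hL hblock t 0 y).trans
    (mul_le_mul_of_nonneg_right (hgeom t) (osc_nonneg y))⟩

end Consensus

section Weights

variable {d : ℕ} (W : ℕ → Matrix (Fin d) (Fin d) ℝ)

theorem abs_forwardProd_succ_apply_le : ∀ t i j, |forwardProd W (t + 1) i j| ≤ Wabs W t i j
  | 0, i, j => by simp [forwardProd, Wabs]
  | t + 1, i, j => by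
    rw [forwardProd, mul_apply, Wabs, mul_apply]
    calc |∑ l, forwardProd W (t + 1) i l * W (t + 1) l j|
        ≤ ∑ l, |forwardProd W (t + 1) i l| * |W (t + 1) l j| :=
          (abs_sum_le_sum_abs _ _).trans_eq (sum_congr rfl fun l _ => abs_mul _ _)
      _ ≤ ∑ l, Wabs W t i l * |W (t + 1) l j| := sum_le_sum fun l _ =>
          mul_le_mul_of_nonneg_right (abs_forwardProd_succ_apply_le t i l) (abs_nonneg _)

theorem exists_abs_mul_forwardProd_apply_le {m : Type*} [Fintype m] (X₀ : Matrix m (Fin d) ℝ)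
    (hW : ∃ C, ∀ k i j, |Wabs W k i j| ≤ C) :
    ∃ R, 0 ≤ R ∧ ∀ t l j, |(X₀ * forwardProd W t) l j| ≤ R := by
  obtain ⟨C, hC⟩ := hW
  have hF : ∀ t i j, |forwardProd W t i j| ≤ max C 1 := fun t i j => by
    cases t with
    | zero => by_cases h : i = j <;> simp [forwardProd, one_apply, h]
    | succ t =>
      exact (abs_forwardProd_succ_apply_le W t i j).trans
        ((le_abs_self _).trans ((hC t i j).trans (le_max_left C 1)))
  refine ⟨∑ l, ∑ k, |X₀ l k| * max C 1, by positivity, fun t l j => ?_⟩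
  rw [mul_apply]
  calc |∑ k, X₀ l k * forwardProd W t k j| ≤ ∑ k, |X₀ l k| * max C 1 :=
        (abs_sum_le_sum_abs _ _).trans (sum_le_sum fun k _ => by
          rw [abs_mul]; exact mul_le_mul_of_nonneg_left (hF t k j) (abs_nonneg _))
    _ ≤ ∑ l, ∑ k, |X₀ l k| * max C 1 :=
        single_le_sum (f := fun l => ∑ k, |X₀ l k| * max C 1)
          (fun l _ => by positivity) (mem_univ l)

end Weights

noncomputable def graphSoftmax {V : Type*} [Fintype V] (G : SimpleGraph V) [DecidableRel G.Adj]
    (e : V → V → ℝ) : Matrix V V ℝ :=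
  Matrix.of fun i j =>
    if G.Adj i j then Real.exp (e i j) / ∑ k ∈ G.neighborFinset i, Real.exp (e i k) else 0

theorem rowStochastic_graphSoftmax {N : ℕ} {G : SimpleGraph (Fin N)} [DecidableRel G.Adj]
    (hG : ∀ i, ∃ j, G.Adj i j) (e : Fin N → Fin N → ℝ) : rowStochastic (graphSoftmax G e) := by
  refine ⟨fun i j => ?_, fun i => ?_⟩
  · simp only [graphSoftmax, of_apply]
    split_ifs
    · positivity
    · rfl
  · obtain ⟨j, hj⟩ := hG i
    have hpos : 0 < ∑ k ∈ G.neighborFinset i, Real.exp (e i k) :=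
      sum_pos (fun k _ => Real.exp_pos _) ⟨j, (G.mem_neighborFinset i j).2 hj⟩
    simp only [graphSoftmax, of_apply]
    rw [← sum_filter, ← neighborFinset_eq_filter, ← sum_div, div_self hpos.ne']

theorem le_graphSoftmax_apply {V : Type*} [Fintype V] {G : SimpleGraph V} [DecidableRel G.Adj]
    {e : V → V → ℝ} {m : ℝ} (hm : ∀ i j, |e i j| ≤ m) {i j : V}
    (hij : G.Adj i j) :
    Real.exp (-m) / (Fintype.card V * Real.exp m) ≤ graphSoftmax G e i j := by
  rw [graphSoftmax, of_apply, if_pos hij]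
  refine div_le_div₀ (Real.exp_pos _).le (Real.exp_le_exp.2 (neg_le_of_abs_le (hm i j)))
    (sum_pos (fun k _ => Real.exp_pos _) ⟨j, (G.mem_neighborFinset i j).2 hij⟩) ?_
  calc ∑ k ∈ G.neighborFinset i, Real.exp (e i k)
      ≤ (G.neighborFinset i).card • Real.exp m :=
        sum_le_card_nsmul _ _ _ fun k _ => Real.exp_le_exp.2 (le_of_abs_le (hm i k))
    _ ≤ Fintype.card V * Real.exp m := by
        rw [nsmul_eq_mul]
        gcongr
        exact card_le_univ _

theorem exists_abs_le_of_forall_abs_le {ι : Type*} [Finite ι] {f : (ι → ℝ) → (ι → ℝ) → ℝ}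
    (hf : Continuous fun p : (ι → ℝ) × (ι → ℝ) => f p.1 p.2) (R : ℝ) :
    ∃ m, ∀ u v, (∀ j, |u j| ≤ R) → (∀ j, |v j| ≤ R) → |f u v| ≤ m := by
  have hbox : IsCompact (Set.univ.pi fun _ : ι => Set.Icc (-R) R) :=
    isCompact_univ_pi fun _ => isCompact_Icc
  obtain ⟨m, hm⟩ := (hbox.prod hbox).exists_bound_of_continuousOn hf.continuousOn
  exact ⟨m, fun u v hu hv => hm (u, v)
    ⟨fun j _ => abs_le.1 (hu j), fun j _ => abs_le.1 (hv j)⟩⟩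

theorem gnnMu_le_of_osc_le {N d : ℕ} [Nonempty (Fin N)] {X : Matrix (Fin N) (Fin d) ℝ} {c : ℝ}
    (hc : 0 ≤ c) (hX : ∀ j, osc (Xᵀ j) ≤ c) : gnnMu X ≤ Real.sqrt (N * d) * c := by
  have hentry : ∀ i j, (X i j - (∑ k, X k j) / N) ^ 2 ≤ c ^ 2 := fun i j => by
    rw [← sq_abs]
    refine pow_le_pow_left₀ (abs_nonneg _) ?_ 2
    simpa using (abs_sub_mean_le_osc (Xᵀ j) i).trans (hX j)
  calc gnnMu X ≤ Real.sqrt (∑ _i : Fin N, ∑ _j : Fin d, c ^ 2) :=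
        Real.sqrt_le_sqrt (sum_le_sum fun i _ => sum_le_sum fun j _ => hentry i j)
    _ = Real.sqrt (N * d) * c := by
        rw [← Real.sqrt_sq hc, ← Real.sqrt_mul (by positivity)]
        simp [mul_assoc]

theorem stmt_13_general (N d : ℕ)
    (G : SimpleGraph (Fin N)) [DecidableRel G.Adj]
    (hA1conn : G.Connected) (hA1nb : ¬ G.Colorable 2)
    (Ψ : (Fin d → ℝ) → (Fin d → ℝ) → ℝ)
    (hA2 : Continuous fun p : (Fin d → ℝ) × (Fin d → ℝ) => Ψ p.1 p.2)
    (W : ℕ → Matrix (Fin d) (Fin d) ℝ)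
    (X : ℕ → Matrix (Fin N) (Fin d) ℝ)
    (P : ℕ → Matrix (Fin N) (Fin N) ℝ)
    (hP : ∀ t i j, P t i j =
      if G.Adj i j then
        Real.exp (Ψ ((X t * W t) i) ((X t * W t) j)) /
          ∑ k ∈ G.neighborFinset i, Real.exp (Ψ ((X t * W t) i) ((X t * W t) k))
      else 0)
    (hdyn : ∀ t, X (t + 1) = P t * X t * W t)
    (hA3 : ∃ C : ℝ, ∀ k i j, |Wabs W k i j| ≤ C) :
    ∃ q : ℝ, 0 < q ∧ q < 1 ∧ ∃ C₁ > 0, ∀ t : ℕ, gnnMu (X t) ≤ C₁ * q ^ t := by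
  have := hA1conn.nonempty
  obtain ⟨L, hL, hwalk⟩ := hA1conn.exists_walk_length_eq hA1nb
  have hsoftmax : ∀ t, P t = graphSoftmax G fun i j => Ψ ((X t * W t) i) ((X t * W t) j) :=
    fun t => Matrix.ext (hP t)
  have hadj : ∀ i, ∃ j, G.Adj i j := fun i => by
    obtain ⟨w, hw⟩ := hwalk i i
    exact ⟨w.snd, w.adj_snd (Walk.not_nil_iff_lt_length.2 (hw ▸ hL))⟩
  have hstoch : ∀ t, rowStochastic (P t) := fun t => hsoftmax t ▸ rowStochastic_graphSoftmax hadj _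
  have hX := eq_backwardProd_mul_mul_forwardProd hdyn
  obtain ⟨R, hR0, hR⟩ := exists_abs_mul_forwardProd_apply_le W (X 0) hA3
  have hrows : ∀ t i j, |(X t * W t) i j| ≤ R := fun t => by
    rw [hX, Matrix.mul_assoc, Matrix.mul_assoc, ← forwardProd]
    exact (rowStochastic_backwardProd hstoch 0 t).abs_mul_apply_le (hR (t + 1))
  obtain ⟨m, hm⟩ := exists_abs_le_of_forall_abs_le hA2 R
  obtain ⟨q, hq0, hq1, K, hK, hosc⟩ := exists_osc_backwardProd_mulVec_le_mul_pow hstoch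
    (by positivity) (fun t i j hij => hsoftmax t ▸
      le_graphSoftmax_apply (fun i j => hm _ _ (hrows t i) (hrows t j)) hij) hL hwalk
  refine ⟨q, hq0, hq1, max (Real.sqrt (N * d) * K * (2 * R)) 1, by positivity, fun t => ?_⟩
  calc gnnMu (X t) ≤ Real.sqrt (N * d) * (K * q ^ t * (2 * R)) := by
        refine gnnMu_le_of_osc_le (by positivity) fun j => ?_
        have hcol : (X t)ᵀ j = backwardProd P 0 t *ᵥ (X 0 * forwardProd W t)ᵀ j := by
          rw [hX, Matrix.mul_assoc]
          rfl
        rw [hcol]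
        exact (hosc t _).trans (mul_le_mul_of_nonneg_left (osc_le_two_mul fun l => hR t l j)
          (by positivity))
    _ = Real.sqrt (N * d) * K * (2 * R) * q ^ t := by ring
    _ ≤ max (Real.sqrt (N * d) * K * (2 * R)) 1 * q ^ t := by
        gcongr
        exact le_max_left _ _

/-- linear attention dynamics (σ = id): under (A1)-(A3), μ(X^(t)) ≤ C₁ qᵗ
for some q ∈ (0,1), C₁ > 0. -/
theorem stmt_13 (N d : ℕ) (hN : 2 ≤ N) (hd : 1 ≤ d)
    (G : SimpleGraph (Fin N)) [DecidableRel G.Adj]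
    (hA1conn : G.Connected) (hA1nb : ¬ G.Colorable 2)
    (Ψ : (Fin d → ℝ) → (Fin d → ℝ) → ℝ)
    (hA2 : Continuous fun p : (Fin d → ℝ) × (Fin d → ℝ) => Ψ p.1 p.2)
    (W : ℕ → Matrix (Fin d) (Fin d) ℝ)
    (X : ℕ → Matrix (Fin N) (Fin d) ℝ)
    (P : ℕ → Matrix (Fin N) (Fin N) ℝ)
    (hP : ∀ t i j, P t i j =
      if G.Adj i j then
        Real.exp (Ψ ((X t * W t) i) ((X t * W t) j)) /
          ∑ k ∈ G.neighborFinset i, Real.exp (Ψ ((X t * W t) i) ((X t * W t) k))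
      else 0)
    (hdyn : ∀ t, X (t + 1) = P t * X t * W t)
    (hA3 : ∃ C : ℝ, ∀ k i j, |Wabs W k i j| ≤ C) :
    ∃ q : ℝ, 0 < q ∧ q < 1 ∧ ∃ C₁ > 0, ∀ t : ℕ, gnnMu (X t) ≤ C₁ * q ^ t :=
  stmt_13_general N d G hA1conn hA1nb Ψ hA2 W X P hP hdyn hA3
end
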